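/- arXiv:2002.08091 — 4 statements merged into one kernel-verified Lean document; each statement's English description precedes it below -/
import Mathlib

section
/- Let G : X × X → [0,∞] satisfy G > 0, G(x,x) = ∞, and the triangle property with constant C ≥ 1: min(G(x,z), G(y,z)) ≤ C·G(x,y) for all x,y,z. Define ρ(x,y) = 1/G(x,y) + 1/G(y,x) (with 1/∞ = 0). Then ρ is a quasi-metric: ρ(x,y) = ρ(y,x), ρ(x,x) = 0, and there exists C' > 0 such that ρ(x,y) ≤ C'·(ρ(x,z) + ρ(z,y)) for all x, y, z. -/
/-!
Inverting the triangle property `min (G x z) (G y z) ≤ C * G x y` gives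
`(G x y)⁻¹ ≤ C * max (G x z)⁻¹ (G y z)⁻¹ ≤ C * ((G x z)⁻¹ + (G y z)⁻¹)`.
Adding this to the same bound with `x` and `y` swapped shows that `ρ` satisfies the quasi-triangle
inequality with constant `2 * C`.
-/

open scoped ENNReal

namespace ENNReal

theorem inv_min_le_inv_add_inv (a b : ℝ≥0∞) : (min a b)⁻¹ ≤ a⁻¹ + b⁻¹ := by
  rcases min_choice a b with h | h <;> rw [h]
  · exact le_self_add
  · exact le_add_self

theorem inv_le_mul_inv_add_inv_of_min_le {a b c C : ℝ≥0∞} (hC₀ : C ≠ 0) (hC : C ≠ ∞)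
    (h : min a b ≤ C * c) : c⁻¹ ≤ C * (a⁻¹ + b⁻¹) :=
  calc c⁻¹ = C * (C * c)⁻¹ := by
        rw [ENNReal.mul_inv (.inl hC₀) (.inl hC), ← mul_assoc, ENNReal.mul_inv_cancel hC₀ hC,
          one_mul]
    _ ≤ C * (a⁻¹ + b⁻¹) :=
        mul_le_mul_right ((ENNReal.inv_le_inv.mpr h).trans (inv_min_le_inv_add_inv a b)) C

end ENNReal

theorem inv_add_inv_le_two_mul_of_min_le {X : Type*} {G : X → X → ℝ≥0∞} {C : ℝ≥0∞}
    (hC₀ : C ≠ 0) (hC : C ≠ ∞) (htri : ∀ x y z : X, min (G x z) (G y z) ≤ C * G x y)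
    (x y z : X) :
    (G x y)⁻¹ + (G y x)⁻¹ ≤ 2 * C * (((G x z)⁻¹ + (G z x)⁻¹) + ((G z y)⁻¹ + (G y z)⁻¹)) :=
  calc (G x y)⁻¹ + (G y x)⁻¹
      ≤ C * ((G x z)⁻¹ + (G y z)⁻¹) + C * ((G y z)⁻¹ + (G x z)⁻¹) :=
        add_le_add (ENNReal.inv_le_mul_inv_add_inv_of_min_le hC₀ hC (htri x y z))
          (ENNReal.inv_le_mul_inv_add_inv_of_min_le hC₀ hC (htri y x z))
    _ = 2 * C * ((G x z)⁻¹ + (G y z)⁻¹) := by ring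
    _ ≤ 2 * C * (((G x z)⁻¹ + (G z x)⁻¹) + ((G z y)⁻¹ + (G y z)⁻¹)) := by
        gcongr
        · exact le_self_add
        · exact le_add_self

theorem stmt_3_general {X : Type*} (G : X → X → ℝ≥0∞)
    (hdiag : ∀ x, G x x = ∞) (C : ℝ≥0∞) (hC : 1 ≤ C) (hCfin : C ≠ ∞)
    (htri : ∀ x y z : X, min (G x z) (G y z) ≤ C * G x y) :
    (∀ x y : X, (G x y)⁻¹ + (G y x)⁻¹ = (G y x)⁻¹ + (G x y)⁻¹) ∧
    (∀ x : X, (G x x)⁻¹ + (G x x)⁻¹ = 0) ∧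
    ∃ C' : ℝ≥0∞, 0 < C' ∧ C' ≠ ∞ ∧
      ∀ x y z : X, (G x y)⁻¹ + (G y x)⁻¹ ≤
        C' * (((G x z)⁻¹ + (G z x)⁻¹) + ((G z y)⁻¹ + (G y z)⁻¹)) := by
  have hC₀ : C ≠ 0 := (zero_lt_one.trans_le hC).ne'
  refine ⟨fun x y => add_comm _ _, fun x => by simp [hdiag x], 2 * C, ?_, ?_,
    inv_add_inv_le_two_mul_of_min_le hC₀ hCfin htri⟩
  · exact ENNReal.mul_pos two_ne_zero hC₀
  · exact ENNReal.mul_ne_top ENNReal.ofNat_ne_top hCfin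

theorem stmt_3 {X : Type*} (G : X → X → ℝ≥0∞) (hpos : ∀ x y, 0 < G x y)
    (hdiag : ∀ x, G x x = ∞) (C : ℝ≥0∞) (hC : 1 ≤ C) (hCfin : C ≠ ∞)
    (htri : ∀ x y z : X, min (G x z) (G y z) ≤ C * G x y) :
    (∀ x y : X, (G x y)⁻¹ + (G y x)⁻¹ = (G y x)⁻¹ + (G x y)⁻¹) ∧
    (∀ x : X, (G x x)⁻¹ + (G x x)⁻¹ = 0) ∧
    ∃ C' : ℝ≥0∞, 0 < C' ∧ C' ≠ ∞ ∧
      ∀ x y z : X, (G x y)⁻¹ + (G y x)⁻¹ ≤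
        C' * (((G x z)⁻¹ + (G z x)⁻¹) + ((G z y)⁻¹ + (G y z)⁻¹)) :=
  stmt_3_general G hdiag C hC hCfin htri
end

section
/- Let (X,d) be a separable metric space, γ > 0, G(x,y) = d(x,y)^{-γ}. Let A ⊆ X be a nonempty closed set, A_0 ⊆ A a Borel set dense in A, and μ a finite Borel measure on X with μ(A) = 0. Then there exists a finite Borel measure ν supported on A_0 such that ‖ν‖ = ‖μ‖ and Gν(x) ≥ 3^{-γ}·Gμ(x) for every x ∈ A. -/
open MeasureTheory Metric Set TopologicalSpace
open scoped ENNReal NNReal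

/-!
Pick a dense sequence `e` in `A₀` and send each `y ∉ A` to a point `f y` of the sequence with
`d(y, f y) < 2 d(y, A)`, taking the first admissible index so that `f` is measurable. Then
`ν = f₊μ` lives on `A₀` and has the mass of `μ`, and for `x ∈ A` the triangle inequality gives
`d(x, f y) ≤ d(x, y) + 2 d(y, A) ≤ 3 d(x, y)`, so `G(x, f y) ≥ 3^{-γ} G(x, y)` for `μ`-a.e. `y`.
-/

theorem TopologicalSpace.IsSeparable.exists_seq_mem_subset_closure_range {X : Type*}
    [TopologicalSpace X] [PseudoMetrizableSpace X] {s : Set X}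
    (hs : IsSeparable s) (hne : s.Nonempty) :
    ∃ e : ℕ → X, (∀ n, e n ∈ s) ∧ s ⊆ closure (range e) := by
  obtain ⟨t, hts, htc, hst⟩ := hs.exists_countable_dense_subset
  obtain ⟨e, rfl⟩ := htc.exists_eq_range (hne.mono hst).of_closure
  exact ⟨e, range_subset_iff.1 hts, hst⟩

section Selection

variable {X : Type*} [PseudoMetricSpace X] {A : Set X}

theorem exists_dist_lt_mul_infDist_of_subset_closure_range (hA : IsClosed A) (hne : A.Nonempty)
    {e : ℕ → X} (hAe : A ⊆ closure (range e)) {c : ℝ≥0} (hc : 1 < c) {y : X} (hy : y ∉ A) :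
    ∃ n, dist y (e n) < c * infDist y A := by
  have hpos : 0 < infDist y A := (hA.notMem_iff_infDist_pos hne).1 hy
  have hlt : infDist y (range e) < c * infDist y A := calc
    infDist y (range e) = infDist y (closure (range e)) := (infDist_closure).symm
    _ ≤ infDist y A := infDist_le_infDist_of_subset hAe hne
    _ < c * infDist y A := lt_mul_left hpos (by exact_mod_cast hc)
  obtain ⟨_, ⟨n, rfl⟩, hn⟩ := (infDist_lt_iff (range_nonempty e)).1 hlt
  exact ⟨n, hn⟩

theorem exists_measurable_dist_lt_mul_infDist [MeasurableSpace X] [OpensMeasurableSpace X]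
    (hA : IsClosed A) (hne : A.Nonempty) {e : ℕ → X} (hAe : A ⊆ closure (range e))
    {c : ℝ≥0} (hc : 1 < c) :
    ∃ f : X → X, Measurable f ∧ (∀ y, f y ∈ range e) ∧
      ∀ y ∉ A, dist y (f y) < c * infDist y A := by
  classical
  let p : ℕ → X → Prop := fun n y => y ∈ A ∨ dist y (e n) < c * infDist y A
  have hp : ∀ y, ∃ n, p n y := fun y => by
    by_cases hy : y ∈ A
    · exact ⟨0, .inl hy⟩
    · obtain ⟨n, hn⟩ := exists_dist_lt_mul_infDist_of_subset_closure_range hA hne hAe hc hy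
      exact ⟨n, .inr hn⟩
  have hp_meas : ∀ n, MeasurableSet {y | p n y} := fun n =>
    hA.measurableSet.union (isOpen_lt (continuous_id.dist continuous_const)
      (continuous_const.mul (continuous_infDist_pt A))).measurableSet
  refine ⟨fun y => e (Nat.find (hp y)), Measurable.find (fun _ => measurable_const) hp_meas hp,
    fun y => mem_range_self _, fun y hy => (Nat.find_spec (hp y)).resolve_left hy⟩

theorem edist_le_one_add_mul_edist_of_dist_le_mul_infDist {x y z : X} (hx : x ∈ A) {c : ℝ≥0}
    (h : dist y z ≤ c * infDist y A) : edist x z ≤ (1 + c) * edist x y := by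
  have hyx : infDist y A ≤ dist x y := dist_comm y x ▸ infDist_le_dist_of_mem hx
  have : dist x z ≤ (1 + c) * dist x y := calc
    dist x z ≤ dist x y + dist y z := dist_triangle x y z
    _ ≤ dist x y + c * dist x y := by gcongr; exact h.trans (by gcongr)
    _ = (1 + c) * dist x y := by ring
  rw [edist_nndist, edist_nndist, ← ENNReal.coe_one, ← ENNReal.coe_add, ← ENNReal.coe_mul,
    ENNReal.coe_le_coe, ← NNReal.coe_le_coe]
  simpa using this

end Selection

theorem ENNReal.rpow_neg_mul_rpow_neg_le {a b c : ℝ≥0∞} (ha : a ≠ ⊤) (hc : c ≠ ⊤) {γ : ℝ}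
    (hγ : 0 ≤ γ) (h : b ≤ c * a) : c ^ (-γ) * a ^ (-γ) ≤ b ^ (-γ) := by
  rw [← ENNReal.mul_rpow_of_ne_top hc ha, ENNReal.rpow_neg, ENNReal.rpow_neg]
  exact ENNReal.inv_le_inv.2 (ENNReal.rpow_le_rpow h hγ)

theorem rpow_neg_mul_lintegral_edist_rpow_neg_le_map {X : Type*} [PseudoMetricSpace X]
    [MeasurableSpace X] [OpensMeasurableSpace X] {μ : Measure X} {f : X → X} (hf : Measurable f)
    {x : X} {c : ℝ≥0} {γ : ℝ} (hγ : 0 ≤ γ) (h : ∀ᵐ y ∂μ, edist x (f y) ≤ c * edist x y) :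
    (c : ℝ≥0∞) ^ (-γ) * ∫⁻ y, edist x y ^ (-γ) ∂μ ≤ ∫⁻ y, edist x y ^ (-γ) ∂μ.map f := by
  have hG : Measurable fun y => edist x y ^ (-γ) :=
    (continuous_const.edist continuous_id).measurable.pow_const _
  rw [lintegral_map hG hf, ← lintegral_const_mul _ hG]
  exact lintegral_mono_ae <| h.mono fun y hy =>
    ENNReal.rpow_neg_mul_rpow_neg_le (edist_ne_top x y) ENNReal.coe_ne_top hγ hy

theorem stmt_10_general {X : Type*} [MetricSpace X] [TopologicalSpace.SeparableSpace X]
    [MeasurableSpace X] [BorelSpace X]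
    (γ : ℝ) (hγ : 0 < γ) (A A₀ : Set X) (hA : IsClosed A) (hne : A.Nonempty)
    (hdense : A ⊆ closure A₀)
    (μ : Measure X) [IsFiniteMeasure μ] (hμA : μ A = 0) :
    ∃ ν : Measure X, IsFiniteMeasure ν ∧ ν A₀ᶜ = 0 ∧ ν Set.univ = μ Set.univ ∧
      ∀ x ∈ A, (3 : ℝ≥0∞) ^ (-γ) * ∫⁻ y, (edist x y) ^ (-γ) ∂μ ≤
        ∫⁻ y, (edist x y) ^ (-γ) ∂ν := by
  obtain ⟨e, heA₀, hA₀e⟩ := (IsSeparable.of_separableSpace A₀)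
    |>.exists_seq_mem_subset_closure_range (hne.mono hdense).of_closure
  have hAe : A ⊆ closure (range e) := hdense.trans (closure_minimal hA₀e isClosed_closure)
  obtain ⟨f, hf, hfe, hfA⟩ := exists_measurable_dist_lt_mul_infDist hA hne hAe one_lt_two
  have hν_range : ∀ᵐ z ∂μ.map f, z ∈ range e :=
    (ae_map_iff hf.aemeasurable (countable_range e).measurableSet).2 (ae_of_all _ hfe)
  refine ⟨μ.map f, inferInstance, ae_iff.1 (hν_range.mono fun z hz => range_subset_iff.2 heA₀ hz),
    by rw [Measure.map_apply hf .univ, preimage_univ], fun x hx => ?_⟩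
  have h3 : ((1 + 2 : ℝ≥0) : ℝ≥0∞) = 3 := by norm_num
  rw [← h3]
  refine rpow_neg_mul_lintegral_edist_rpow_neg_le_map hf hγ.le ?_
  filter_upwards [measure_eq_zero_iff_ae_notMem.1 hμA] with y hy
  exact edist_le_one_add_mul_edist_of_dist_le_mul_infDist hx (hfA y hy).le

theorem stmt_10 {X : Type*} [MetricSpace X] [TopologicalSpace.SeparableSpace X]
    [MeasurableSpace X] [BorelSpace X]
    (γ : ℝ) (hγ : 0 < γ) (A A₀ : Set X) (hA : IsClosed A) (hne : A.Nonempty)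
    (hA₀m : MeasurableSet A₀) (hsub : A₀ ⊆ A) (hdense : A ⊆ closure A₀)
    (μ : Measure X) [IsFiniteMeasure μ] (hμA : μ A = 0) :
    ∃ ν : Measure X, IsFiniteMeasure ν ∧ ν A₀ᶜ = 0 ∧ ν Set.univ = μ Set.univ ∧
      ∀ x ∈ A, (3 : ℝ≥0∞) ^ (-γ) * ∫⁻ y, (edist x y) ^ (-γ) ∂μ ≤
        ∫⁻ y, (edist x y) ^ (-γ) ∂ν :=
  stmt_10_general γ hγ A A₀ hA hne hdense μ hμA
end

section
/- Let (X,d) be a separable metric space, γ > 0, G(x,y) = d(x,y)^{-γ}. Let A ⊆ X be a nonempty closed set and μ a finite Borel measure on X. Then there exists a finite Borel measure ν supported on A such that ‖ν‖ = ‖μ‖ and Gν ≥ 3^{-γ}·Gμ on A. -/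
/-!
Sweep the part of `μ` outside `A` onto `A` along a measurable map `g : X → X` that fixes `A` and
sends each `y ∉ A` to a point of `A` at distance less than `2 d(y, A)`; such a `g` is obtained by
picking, among a countable dense subset of `A`, the first point that is close enough. For `x ∈ A`
the triangle inequality gives `d(x, g y) ≤ d(x, y) + 2 d(y, A) ≤ 3 d(x, y)`, so the kernel
`d(x, ·)^{-γ}` loses at most the factor `3^{-γ}` under `g`, and `ν = g_* μ` works.
-/

open MeasureTheory Metric Set
open scoped ENNReal NNReal

theorem edist_le_one_add_mul_of_edist_le_mul_infEDist {X : Type*} [PseudoEMetricSpace X]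
    {A : Set X} {x y z : X} {c : ℝ≥0∞} (hx : x ∈ A) (h : edist y z ≤ c * infEDist y A) :
    edist x z ≤ (1 + c) * edist x y :=
  calc edist x z ≤ edist x y + edist y z := edist_triangle x y z
    _ ≤ edist x y + c * edist x y := by
      gcongr
      exact h.trans (by rw [edist_comm x y]; gcongr; exact infEDist_le_edist_of_mem hx)
    _ = (1 + c) * edist x y := by ring

theorem ENNReal.rpow_neg_le_rpow_neg {a b : ℝ≥0∞} {z : ℝ} (hz : 0 ≤ z) (h : a ≤ b) :
    b ^ (-z) ≤ a ^ (-z) := by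
  rw [ENNReal.rpow_neg, ENNReal.rpow_neg, ENNReal.inv_le_inv]
  exact ENNReal.rpow_le_rpow h hz

section Selection

variable {X : Type*} [PseudoMetricSpace X] {A : Set X}

theorem exists_seq_mem_subset_closure_range [TopologicalSpace.SeparableSpace X]
    (hne : A.Nonempty) : ∃ u : ℕ → X, (∀ n, u n ∈ A) ∧ A ⊆ closure (range u) := by
  obtain ⟨t, htA, htc, hAt⟩ :=
    (TopologicalSpace.IsSeparable.of_separableSpace A).exists_countable_dense_subset
  obtain ⟨u, rfl⟩ := htc.exists_eq_range (hne.mono hAt).of_closure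
  exact ⟨u, fun n => htA (mem_range_self n), hAt⟩

theorem exists_edist_lt_mul_infEDist {u : ℕ → X} (hA : IsClosed A) (hne : A.Nonempty)
    (hu : A ⊆ closure (range u)) {c : ℝ≥0} (hc : 1 < c) {y : X} (hy : y ∉ A) :
    ∃ n, edist y (u n) < c * infEDist y A := by
  have hpos : infEDist y A ≠ 0 := by
    rwa [← hA.closure_eq, ← infEDist_pos_iff_notMem_closure, pos_iff_ne_zero] at hy
  have hlt : infEDist y (range u) < c * infEDist y A := by
    calc infEDist y (range u) = infEDist y (closure (range u)) := infEDist_closure.symm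
      _ ≤ infEDist y A := infEDist_anti hu
      _ < c * infEDist y A := by
        simpa using ENNReal.mul_lt_mul_left hpos (infEDist_ne_top hne) (ENNReal.one_lt_coe_iff.2 hc)
  obtain ⟨_, ⟨n, rfl⟩, hn⟩ := infEDist_lt_iff.1 hlt
  exact ⟨n, hn⟩

theorem exists_measurable_edist_le_mul_infEDist [TopologicalSpace.SeparableSpace X]
    [MeasurableSpace X] [OpensMeasurableSpace X] (hA : IsClosed A) (hne : A.Nonempty)
    {c : ℝ≥0} (hc : 1 < c) :
    ∃ g : X → X, Measurable g ∧ (∀ y, g y ∈ A) ∧ ∀ y, edist y (g y) ≤ c * infEDist y A := by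
  classical
  obtain ⟨u, huA, hu⟩ := exists_seq_mem_subset_closure_range hne
  let p : ℕ → X → Prop := fun n y => y ∈ A ∨ edist y (u n) < c * infEDist y A
  have hp : ∀ y, ∃ n, p n y := fun y => by
    by_cases hy : y ∈ A
    · exact ⟨0, Or.inl hy⟩
    · exact (exists_edist_lt_mul_infEDist hA hne hu hc hy).imp fun _ => Or.inr
  have hpm : ∀ n, MeasurableSet {y | p n y} := fun n =>
    MeasurableSet.union hA.measurableSet <| measurableSet_lt (by fun_prop)
      (((ENNReal.continuous_const_mul ENNReal.coe_ne_top).comp continuous_infEDist).measurable)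
  refine ⟨A.piecewise id fun y => u (Nat.find (hp y)),
    Measurable.piecewise hA.measurableSet measurable_id
      (Measurable.find (f := fun n _ => u n) (fun _ => measurable_const) hpm hp),
    fun y => ?_, fun y => ?_⟩
  · by_cases hy : y ∈ A <;> simp [hy, huA]
  · by_cases hy : y ∈ A
    · simp [hy]
    · simp only [piecewise_eq_of_notMem _ _ _ hy]
      exact ((Nat.find_spec (hp y)).resolve_left hy).le

end Selection

theorem stmt_11 {X : Type*} [MetricSpace X] [TopologicalSpace.SeparableSpace X]
    [MeasurableSpace X] [BorelSpace X]
    (γ : ℝ) (hγ : 0 < γ) (A : Set X) (hA : IsClosed A) (hne : A.Nonempty)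
    (μ : Measure X) [IsFiniteMeasure μ] :
    ∃ ν : Measure X, IsFiniteMeasure ν ∧ ν Aᶜ = 0 ∧ ν Set.univ = μ Set.univ ∧
      ∀ x ∈ A, (3 : ℝ≥0∞) ^ (-γ) * ∫⁻ y, (edist x y) ^ (-γ) ∂μ ≤
        ∫⁻ y, (edist x y) ^ (-γ) ∂ν := by
  obtain ⟨g, hg, hgA, hg_edist⟩ := exists_measurable_edist_le_mul_infEDist hA hne one_lt_two
  refine ⟨μ.map g, inferInstance, ?_, ?_, fun x hx => ?_⟩
  · rw [Measure.map_apply hg hA.measurableSet.compl]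
    simp [preimage, hgA]
  · rw [Measure.map_apply hg MeasurableSet.univ, preimage_univ]
  have hG : Measurable fun y => edist x y ^ (-γ) := by fun_prop
  rw [lintegral_map hG hg, ← lintegral_const_mul _ hG]
  refine lintegral_mono fun y => ?_
  have h3 : edist x (g y) ≤ 3 * edist x y := by
    simpa [show (1 : ℝ≥0∞) + 2 = 3 by norm_num] using
      edist_le_one_add_mul_of_edist_le_mul_infEDist hx (hg_edist y)
  rw [← ENNReal.mul_rpow_of_ne_top (by simp) (edist_ne_top x y)]
  exact ENNReal.rpow_neg_le_rpow_neg hγ.le h3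
end

section
/- Let (X,d) be a separable metric space, γ > 0, G(x,y) = d(x,y)^{-γ}. Let P = ∪_{m∈ℕ} A_m with each A_m closed, and suppose c*(P) = 0 (equivalently, some finite measure μ satisfies Gμ = ∞ on P). Then there exists a finite measure ν supported on P with ‖ν‖ ≤ 1 and Gν = ∞ on P. -/
/-!
Sweep `μ` onto each closed piece `A m` by a measurable map `f` into `A m` with
`d(x, f y) ≤ 3 d(x, y)` for `x ∈ A m`: pushing `μ` forward along `f` loses at most the factor
`3 ^ (-γ)` in the potential at points of `A m`, so it stays infinite there. A convergent weighted
sum of the swept measures is then a measure of mass at most one, carried by `P`, whose potential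
is infinite on all of `P`.
-/

open MeasureTheory Metric Set
open scoped ENNReal

section

variable {X : Type*} [MetricSpace X]

lemma exists_seq_mem_and_subset_closure_range [TopologicalSpace.SeparableSpace X] {C : Set X}
    (hC : C.Nonempty) : ∃ g : ℕ → X, (∀ n, g n ∈ C) ∧ C ⊆ closure (range g) := by
  obtain ⟨t, htC, htc, hCt⟩ :=
    (TopologicalSpace.IsSeparable.of_separableSpace C).exists_countable_dense_subset
  obtain ⟨g, rfl⟩ := htc.exists_eq_range (closure_nonempty_iff.1 (hC.mono hCt))
  exact ⟨g, fun n => htC (mem_range_self n), hCt⟩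

lemma exists_dist_lt_two_mul_infDist {C : Set X} {g : ℕ → X} (hC : C.Nonempty)
    (hCg : C ⊆ closure (range g)) {y : X} (hy : 0 < infDist y C) :
    ∃ n, dist y (g n) < 2 * infDist y C := by
  have : infDist y (range g) < 2 * infDist y C := by
    calc infDist y (range g) = infDist y (closure (range g)) := infDist_closure.symm
      _ ≤ infDist y C := infDist_le_infDist_of_subset hCg hC
      _ < 2 * infDist y C := by linarith
  obtain ⟨_, ⟨n, rfl⟩, hn⟩ := (infDist_lt_iff (range_nonempty g)).1 this
  exact ⟨n, hn⟩

/-- Points outside `C` are sent to a point of a dense sequence in `C` at distance less than twice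
their distance to `C`; the first such index is chosen, which keeps the map measurable. -/
lemma exists_measurable_map_into_dist_le_three_mul [TopologicalSpace.SeparableSpace X]
    [MeasurableSpace X] [BorelSpace X] {C : Set X} (hC : IsClosed C) (hne : C.Nonempty) :
    ∃ f : X → X, Measurable f ∧ (∀ y, f y ∈ C) ∧ ∀ x ∈ C, ∀ y, dist x (f y) ≤ 3 * dist x y := by
  classical
  obtain ⟨g, hgC, hCg⟩ := exists_seq_mem_and_subset_closure_range hne
  have hex : ∀ y, ∃ n, y ∈ C ∨ dist y (g n) < 2 * infDist y C := fun y => by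
    by_cases hy : y ∈ C
    · exact ⟨0, Or.inl hy⟩
    · obtain ⟨n, hn⟩ :=
        exists_dist_lt_two_mul_infDist hne hCg ((hC.notMem_iff_infDist_pos hne).1 hy)
      exact ⟨n, Or.inr hn⟩
  have hF : Measurable fun y => g (Nat.find (hex y)) :=
    Measurable.find (f := fun n (_ : X) => g n)
      (p := fun n y => y ∈ C ∨ dist y (g n) < 2 * infDist y C) (fun _ => measurable_const)
      (fun n => hC.measurableSet.union (isOpen_lt (continuous_id.dist continuous_const)
        (continuous_const.mul (continuous_infDist_pt C))).measurableSet) hex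
  refine ⟨C.piecewise id fun y => g (Nat.find (hex y)),
    measurable_id.piecewise hC.measurableSet hF, fun y => ?_, fun x hx y => ?_⟩
  · by_cases hy : y ∈ C
    · simpa [piecewise_eq_of_mem _ _ _ hy] using hy
    · simpa [piecewise_eq_of_notMem _ _ _ hy] using hgC _
  · by_cases hy : y ∈ C
    · simpa [piecewise_eq_of_mem _ _ _ hy] using le_mul_of_one_le_left dist_nonneg
        (by norm_num : (1 : ℝ) ≤ 3)
    · rw [piecewise_eq_of_notMem _ _ _ hy]
      have hnear := (Nat.find_spec (hex y)).resolve_left hy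
      have hxy : infDist y C ≤ dist x y := dist_comm y x ▸ infDist_le_dist_of_mem hx
      linarith [dist_triangle x y (g (Nat.find (hex y)))]

variable [MeasurableSpace X] [BorelSpace X]

lemma measurable_edist_rpow (x : X) (s : ℝ) : Measurable fun y => edist x y ^ s :=
  (ENNReal.continuous_rpow_const.comp (continuous_const.edist continuous_id)).measurable

lemma exists_sweep_edist_rpow_neg [TopologicalSpace.SeparableSpace X] {γ : ℝ} (hγ : 0 ≤ γ)
    {C : Set X} (hC : IsClosed C) (μ : Measure X) :
    ∃ ν : Measure X, ν Cᶜ = 0 ∧ ν univ ≤ μ univ ∧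
      ∀ x ∈ C, 3 ^ (-γ) * ∫⁻ y, edist x y ^ (-γ) ∂μ ≤ ∫⁻ y, edist x y ^ (-γ) ∂ν := by
  rcases C.eq_empty_or_nonempty with rfl | hne
  · exact ⟨0, by simp, by simp, by simp⟩
  obtain ⟨f, hfm, hfC, hfd⟩ := exists_measurable_map_into_dist_le_three_mul hC hne
  refine ⟨μ.map f, ?_, ?_, fun x hx => ?_⟩
  · rw [Measure.map_apply hfm hC.measurableSet.compl, preimage_compl,
      show f ⁻¹' C = univ from eq_univ_of_forall hfC, compl_univ, measure_empty]
  · rw [Measure.map_apply hfm MeasurableSet.univ, preimage_univ]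
  · rw [lintegral_map (measurable_edist_rpow x _) hfm,
      ← lintegral_const_mul _ (measurable_edist_rpow x _)]
    refine lintegral_mono fun y => ?_
    have hedist : edist x (f y) ≤ 3 * edist x y := by
      rw [edist_dist, edist_dist, ← ENNReal.ofReal_ofNat, ← ENNReal.ofReal_mul (by norm_num)]
      exact ENNReal.ofReal_le_ofReal (hfd x hx y)
    rw [← ENNReal.mul_rpow_of_ne_top (by norm_num) (edist_ne_top x y), ENNReal.rpow_neg,
      ENNReal.rpow_neg]
    exact ENNReal.inv_le_inv.2 (ENNReal.rpow_le_rpow hedist hγ)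

end

/-- With weights `2 ^ (-(m + 1)) / (1 + ν m univ)` each term has mass below `2 ^ (-(m + 1))`. -/
lemma exists_sum_smul_measure_univ_le_one {X : Type*} [MeasurableSpace X] (ν : ℕ → Measure X)
    [∀ m, IsFiniteMeasure (ν m)] :
    ∃ c : ℕ → ℝ≥0∞, (∀ m, c m ≠ 0) ∧ Measure.sum (fun m => c m • ν m) univ ≤ 1 := by
  refine ⟨fun m => 2⁻¹ ^ (m + 1) * (1 + ν m univ)⁻¹, fun m => ?_, ?_⟩
  · exact mul_ne_zero (pow_ne_zero _ (by norm_num)) (ENNReal.inv_ne_zero.2 (by simp))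
  have hterm : ∀ m, 2⁻¹ ^ (m + 1) * (1 + ν m univ)⁻¹ * ν m univ ≤ 2⁻¹ ^ (m + 1) := fun m => by
    rw [mul_assoc]
    refine mul_le_of_le_one_right zero_le ?_
    rw [← ENNReal.div_eq_inv_mul, ENNReal.div_le_iff (by simp) (by simp), one_mul]
    exact le_add_self
  calc Measure.sum (fun m => (2⁻¹ ^ (m + 1) * (1 + ν m univ)⁻¹) • ν m) univ
      ≤ ∑' m : ℕ, (2⁻¹ : ℝ≥0∞) ^ (m + 1) := by
        simpa [Measure.sum_apply _ MeasurableSet.univ] using ENNReal.tsum_le_tsum hterm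
    _ = 1 := by
        simp_rw [pow_succ, ENNReal.tsum_mul_right, ENNReal.tsum_geometric,
          ENNReal.one_sub_inv_two, inv_inv]
        exact ENNReal.mul_inv_cancel two_ne_zero ENNReal.ofNat_ne_top

theorem stmt_12 {X : Type*} [MetricSpace X] [TopologicalSpace.SeparableSpace X]
    [MeasurableSpace X] [BorelSpace X]
    (γ : ℝ) (hγ : 0 < γ) (A : ℕ → Set X) (hA : ∀ m, IsClosed (A m))
    (P : Set X) (hP : P = ⋃ m, A m)
    (μ : Measure X) [IsFiniteMeasure μ]
    (hμ : ∀ x ∈ P, ∫⁻ y, (edist x y) ^ (-γ) ∂μ = ∞) :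
    ∃ ν : Measure X, IsFiniteMeasure ν ∧ ν Pᶜ = 0 ∧ ν Set.univ ≤ 1 ∧
      ∀ x ∈ P, ∫⁻ y, (edist x y) ^ (-γ) ∂ν = ∞ := by
  subst hP
  choose ν hνA hνμ hνpot using fun m => exists_sweep_edist_rpow_neg hγ.le (hA m) μ
  have : ∀ m, IsFiniteMeasure (ν m) := fun m => ⟨(hνμ m).trans_lt (measure_lt_top μ univ)⟩
  obtain ⟨c, hc, hmass⟩ := exists_sum_smul_measure_univ_le_one ν
  refine ⟨Measure.sum fun m => c m • ν m, ⟨hmass.trans_lt ENNReal.one_lt_top⟩, ?_, hmass, ?_⟩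
  · rw [Measure.sum_apply _ (MeasurableSet.iUnion fun m => (hA m).measurableSet).compl]
    refine ENNReal.tsum_eq_zero.2 fun m => ?_
    rw [Measure.smul_apply, measure_mono_null (compl_subset_compl.2 (subset_iUnion A m)) (hνA m),
      smul_zero]
  · intro x hx
    obtain ⟨m, hm⟩ := mem_iUnion.1 hx
    have hpot : ∫⁻ y, edist x y ^ (-γ) ∂ν m = ∞ := by
      have h3 : (3 : ℝ≥0∞) ^ (-γ) ≠ 0 := (ENNReal.rpow_pos (by norm_num) (by norm_num)).ne'
      simpa [hμ x hx, ENNReal.mul_top h3] using hνpot m x hm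
    rw [lintegral_sum_measure]
    exact ENNReal.tsum_eq_top_of_eq_top ⟨m, by simp [lintegral_smul_measure, hpot, hc m]⟩
end
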